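/- arXiv:2011.03471 — 5 statements merged into one kernel-verified Lean document; each statement's English description precedes it below -/
import Mathlib

section
/- (Lemma 1: language expansion by cover) Let K be a zipped vertex cover on a deterministic filter F with no unreachable states, and let F† be a filter induced from K. Then the interaction language of F is contained in the interaction language of F†. More precisely, for every string s∈L(F), if s reaches state v in F, then s reaches some state v†_i in F† such that the corresponding set K_i contains v. -/
/-- A (combinatorial / procrustean) filter: states `V`, observations `Y`, outputs `C`. -/
structure ProcFilter (V Y C : Type) where
  V0 : Set V
  tr : V → V → Set Y
  out : V → Set C
  out_nonempty : ∀ v, (out v).Nonempty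

namespace ProcFilter

variable {V W X Y C : Type}

/-- States reached by tracing a string from state `v`. -/
def reachedFrom (F : ProcFilter V Y C) : V → List Y → Set V
  | v, [] => {v}
  | v, y :: s => {w | ∃ u, y ∈ F.tr v u ∧ w ∈ F.reachedFrom u s}

/-- States reached by a string from the initial states. -/
def reached (F : ProcFilter V Y C) (s : List Y) : Set V :=
  ⋃ v0 ∈ F.V0, F.reachedFrom v0 s

/-- Interaction language of `F`. -/
def lang (F : ProcFilter V Y C) : Set (List Y) :=
  {s | (F.reached s).Nonempty}

/-- Outputs of all states reached by `s`. -/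
def outs (F : ProcFilter V Y C) (s : List Y) : Set C :=
  ⋃ v ∈ F.reached s, F.out v

/-- Strings reaching state `w` from the initial states. -/
def reaching (F : ProcFilter V Y C) (w : V) : Set (List Y) :=
  {s | w ∈ F.reached s}

/-- A deterministic filter: one initial state, disjoint outgoing labels. -/
def Deterministic (F : ProcFilter V Y C) : Prop :=
  (∃ v0, F.V0 = {v0}) ∧
    ∀ v1 v2 v3 : V, v2 ≠ v3 → F.tr v1 v2 ∩ F.tr v1 v3 = ∅

/-- `F'` output simulates `F`. -/
def OutputSimulates (F' : ProcFilter W Y C) (F : ProcFilter V Y C) : Prop :=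
  ∀ s ∈ F.lang, (F'.outs s).Nonempty ∧ F'.outs s ⊆ F.outs s

/-- The `y`-children of a set of states `S` in `F`. -/
def yChildren (F : ProcFilter V Y C) (S : Set V) (y : Y) : Set V :=
  {w | ∃ v ∈ S, y ∈ F.tr v w}

/-- A vertex cover on `F`: a collection of subsets of states covering all states. -/
def IsCover (_F : ProcFilter V Y C) (K : Set (Set V)) : Prop :=
  ⋃₀ K = (Set.univ : Set V)

/-- A zipped collection: the `y`-children of each member lie in some member. -/
def Zipped (F : ProcFilter V Y C) (K : Set (Set V)) : Prop :=
  ∀ S ∈ K, ∀ y : Y, ∃ T ∈ K, F.yChildren S y ⊆ T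

/-- `G` is a filter induced from a (zipped) vertex cover `K` on `F`,
where `κ` maps each state of `G` to its corresponding member of `K`. -/
structure IsInduced (G : ProcFilter W Y C) (F : ProcFilter V Y C)
    (K : Set (Set V)) (κ : W → Set V) : Prop where
  mem : ∀ w : W, κ w ∈ K
  nonempty : ∀ w : W, (κ w).Nonempty
  inj : Function.Injective κ
  surj : ∀ S ∈ K, S.Nonempty → ∃ w : W, κ w = S
  init : ∃ w0 : W, G.V0 = {w0} ∧ ∀ v0 ∈ F.V0, v0 ∈ κ w0
  trans_sub : ∀ (w w' : W) (y : Y), y ∈ G.tr w w' →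
      F.yChildren (κ w) y ⊆ κ w' ∧ (F.yChildren (κ w) y).Nonempty
  trans_ex : ∀ (w : W) (y : Y), (F.yChildren (κ w) y).Nonempty →
      ∃ w' : W, y ∈ G.tr w w'
  trans_unique : ∀ (w w1 w2 : W) (y : Y), y ∈ G.tr w w1 → y ∈ G.tr w w2 → w1 = w2
  out_single : ∀ w : W, ∃ o : C, G.out w = {o} ∧ ∀ v ∈ κ w, o ∈ F.out v

end ProcFilter

/-- Lemma 1: language expansion by a zipped cover, and the
precise reached-state correspondence. -/
theorem stmt_3 {V W Y C : Type} [Finite V] [Finite W]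
    (F : ProcFilter V Y C) (G : ProcFilter W Y C)
    (K : Set (Set V)) (κ : W → Set V)
    (hdet : F.Deterministic)
    (hreach : ∀ v : V, (F.reaching v).Nonempty)
    (hcov : F.IsCover K) (hzip : F.Zipped K)
    (hind : G.IsInduced F K κ) :
    F.lang ⊆ G.lang ∧
      ∀ s ∈ F.lang, ∀ v ∈ F.reached s, ∃ w ∈ G.reached s, v ∈ κ w := by
  have key : ∀ (s : List Y) (v0 v : V) (w : W), v ∈ F.reachedFrom v0 s → v0 ∈ κ w →
      ∃ w', w' ∈ G.reachedFrom w s ∧ v ∈ κ w' := by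
    intro s
    induction s with
    | nil =>
      intro v0 v w hv hv0
      exact ⟨w, rfl, by simpa [ProcFilter.reachedFrom] using hv ▸ hv0⟩
    | cons y s ih =>
      intro v0 v w hv hv0
      obtain ⟨u, hu, hvs⟩ := hv
      have hne : (F.yChildren (κ w) y).Nonempty := ⟨u, v0, hv0, hu⟩
      obtain ⟨w', hw'⟩ := hind.trans_ex w y hne
      have hsub := (hind.trans_sub w w' y hw').1
      have hu' : u ∈ κ w' := hsub ⟨v0, hv0, hu⟩
      obtain ⟨w'', hw'', hv''⟩ := ih u v w' hvs hu'
      exact ⟨w'', ⟨w', hw', hw''⟩, hv''⟩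
  have main : ∀ s : List Y, ∀ v ∈ F.reached s, ∃ w ∈ G.reached s, v ∈ κ w := by
    intro s v hv
    obtain ⟨v0, hv0, hvs⟩ := Set.mem_iUnion₂.mp hv
    obtain ⟨w0, hGV0, hw0⟩ := hind.init
    obtain ⟨w, hwr, hvw⟩ := key s v0 v w0 hvs (hw0 v0 hv0)
    exact ⟨w, Set.mem_iUnion₂.mpr ⟨w0, by simp [hGV0], hwr⟩, hvw⟩
  refine ⟨?_, fun s _ => main s⟩
  intro s hs
  obtain ⟨v, hv⟩ := hs
  obtain ⟨w, hw, -⟩ := main s v hv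
  exact ⟨w, hw⟩
end

section
/- Let F be a deterministic filter with all states reachable, and let K be a zipped vertex cover on F such that every K_i has a common output (⋂_{v∈K_i} c(v)≠∅). Then any induced filter F† output simulates F. -/
namespace ProcFilter

lemma reachedFrom_snoc {V Y C : Type} (F : ProcFilter V Y C) (v : V) (s : List Y) (y : Y) :
    F.reachedFrom v (s ++ [y]) = F.yChildren (F.reachedFrom v s) y := by
  induction s generalizing v with
  | nil =>
    ext w
    simp [reachedFrom, yChildren]
  | cons a t ih =>
    ext w
    constructor
    · rintro ⟨u, hu, hw⟩
      change w ∈ F.reachedFrom u (t ++ [y]) at hw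
      rw [ih] at hw
      obtain ⟨p, hp, hpw⟩ := hw
      exact ⟨p, ⟨u, hu, hp⟩, hpw⟩
    · rintro ⟨p, ⟨u, hu, hp⟩, hpw⟩
      refine ⟨u, hu, ?_⟩
      show w ∈ F.reachedFrom u (t ++ [y])
      rw [ih]
      exact ⟨p, hp, hpw⟩

lemma reached_snoc {V Y C : Type} (F : ProcFilter V Y C) (s : List Y) (y : Y) :
    F.reached (s ++ [y]) = F.yChildren (F.reached s) y := by
  ext w
  simp only [reached, reachedFrom_snoc, Set.mem_iUnion, yChildren, Set.mem_setOf_eq]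
  constructor
  · rintro ⟨v0, h0, v, hv, hvw⟩
    exact ⟨v, ⟨v0, h0, hv⟩, hvw⟩
  · rintro ⟨v, ⟨v0, h0, hv⟩, hvw⟩
    exact ⟨v0, h0, v, hv, hvw⟩

end ProcFilter

/-- An induced filter of a zipped cover with common outputs
output simulates the original deterministic filter. -/
theorem stmt_5 {V W Y C : Type} [Finite V] [Finite W]
    (F : ProcFilter V Y C) (G : ProcFilter W Y C)
    (K : Set (Set V)) (κ : W → Set V)
    (hdet : F.Deterministic)
    (hreach : ∀ v : V, (F.reaching v).Nonempty)
    (hcov : F.IsCover K) (hzip : F.Zipped K)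
    (hcom : ∀ S ∈ K, (⋂ v ∈ S, F.out v).Nonempty)
    (hind : G.IsInduced F K κ) :
    G.OutputSimulates F := by
  obtain ⟨w0, hV0, hinit⟩ := hind.init
  -- key invariant
  have key : ∀ s : List Y, s ∈ F.lang →
      ∃ w : W, G.reached s = {w} ∧ F.reached s ⊆ κ w := by
    intro s
    induction s using List.reverseRecOn with
    | nil =>
      intro _
      refine ⟨w0, ?_, ?_⟩
      · ext u
        simp [ProcFilter.reached, hV0, ProcFilter.reachedFrom]
      · intro v hv
        rw [ProcFilter.reached, Set.mem_iUnion₂] at hv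
        obtain ⟨v0, h0, hv⟩ := hv
        have hveq : v = v0 := hv
        subst hveq
        exact hinit v h0
    | append_singleton t y ih =>
      intro hs
      obtain ⟨v, hv⟩ := hs
      rw [ProcFilter.reached_snoc] at hv
      obtain ⟨u, hu, huv⟩ := hv
      have ht : t ∈ F.lang := ⟨u, hu⟩
      obtain ⟨w, hGw, hFw⟩ := ih ht
      -- yChildren (κ w) y is nonempty
      have hne : (F.yChildren (κ w) y).Nonempty := ⟨v, u, hFw hu, huv⟩
      obtain ⟨w', hw'⟩ := hind.trans_ex w y hne
      obtain ⟨hsub, -⟩ := hind.trans_sub w w' y hw'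
      refine ⟨w', ?_, ?_⟩
      · rw [ProcFilter.reached_snoc, hGw]
        ext u'
        simp only [ProcFilter.yChildren, Set.mem_setOf_eq, Set.mem_singleton_iff]
        constructor
        · rintro ⟨p, rfl, hpu'⟩
          exact hind.trans_unique p u' w' y hpu' hw'
        · rintro rfl
          exact ⟨w, rfl, hw'⟩
      · rw [ProcFilter.reached_snoc]
        intro x hx
        obtain ⟨p, hp, hpx⟩ := hx
        exact hsub ⟨p, hFw hp, hpx⟩
  intro s hs
  obtain ⟨w, hGw, hFw⟩ := key s hs
  obtain ⟨o, ho, hoκ⟩ := hind.out_single w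
  obtain ⟨v, hv⟩ := hs
  have houts : G.outs s = {o} := by
    simp [ProcFilter.outs, hGw, ho]
  constructor
  · rw [houts]; exact ⟨o, rfl⟩
  · rw [houts]
    intro c hc
    rw [Set.mem_singleton_iff] at hc; subst hc
    exact Set.mem_biUnion hv (hoκ v (hFw hv))
end

section
/- Let F be a deterministic filter and F* a deterministic filter with L(F)⊆L(F*). For each state v* of F*, define K_{v*}={v∈V(F) | R_F(v)∩R_{F*}(v*)≠∅}. Then the cover {K_{v*}} is zipped: for every v*∈V(F*) and observation y∈Y, there exists a state w*∈V(F*) such that all y-children (in F) of states in K_{v*} are contained in K_{w*}. -/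
namespace ProcFilter

variable {V Y C : Type}

lemma reachedFrom_append (F : ProcFilter V Y C) (v : V) (s : List Y) (y : Y) (w : V) :
    w ∈ F.reachedFrom v (s ++ [y]) ↔ ∃ u ∈ F.reachedFrom v s, y ∈ F.tr u w := by
  induction s generalizing v with
  | nil => simp [reachedFrom]
  | cons a t ih =>
    simp only [List.cons_append, reachedFrom, Set.mem_setOf_eq]
    constructor
    · rintro ⟨u, ha, hw⟩
      obtain ⟨x, hx, hy⟩ := (ih u).mp hw
      exact ⟨x, ⟨u, ha, hx⟩, hy⟩
    · rintro ⟨x, ⟨u, ha, hx⟩, hy⟩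
      exact ⟨u, ha, (ih u).mpr ⟨x, hx, hy⟩⟩

lemma reached_append (F : ProcFilter V Y C) (s : List Y) (y : Y) (w : V) :
    w ∈ F.reached (s ++ [y]) ↔ ∃ u ∈ F.reached s, y ∈ F.tr u w := by
  simp only [reached, Set.mem_iUnion, exists_prop]
  constructor
  · rintro ⟨v0, hv0, hw⟩
    obtain ⟨u, hu, hy⟩ := (F.reachedFrom_append v0 s y w).mp hw
    exact ⟨u, ⟨v0, hv0, hu⟩, hy⟩
  · rintro ⟨u, ⟨v0, hv0, hu⟩, hy⟩
    exact ⟨v0, hv0, (F.reachedFrom_append v0 s y w).mpr ⟨u, hu, hy⟩⟩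

lemma reachedFrom_subsingleton (F : ProcFilter V Y C)
    (hdet : ∀ v1 v2 v3 : V, v2 ≠ v3 → F.tr v1 v2 ∩ F.tr v1 v3 = ∅)
    (v : V) (s : List Y) : (F.reachedFrom v s).Subsingleton := by
  induction s generalizing v with
  | nil => simp [reachedFrom]
  | cons a t ih =>
    rintro w1 ⟨u1, h1, hw1⟩ w2 ⟨u2, h2, hw2⟩
    obtain rfl : u1 = u2 := by
      by_contra h
      have := hdet v u1 u2 h
      exact absurd (Set.mem_inter h1 h2) (by simp [this])
    exact ih u1 hw1 hw2

lemma reached_subsingleton (F : ProcFilter V Y C) (hdet : F.Deterministic)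
    (s : List Y) : (F.reached s).Subsingleton := by
  obtain ⟨⟨v0, hv0⟩, hd⟩ := hdet
  intro w1 h1 w2 h2
  simp only [reached, hv0, Set.mem_iUnion, Set.mem_singleton_iff, exists_prop,
    exists_eq_left] at h1 h2
  exact F.reachedFrom_subsingleton hd v0 s h1 h2

end ProcFilter

/-- the cover {K_{v*}} is zipped. -/
theorem stmt_8 {V W Y C : Type} [Finite V] [Finite W] [Nonempty W]
    (F : ProcFilter V Y C) (Fstar : ProcFilter W Y C)
    (hdet : F.Deterministic) (hdet' : Fstar.Deterministic)
    (hlang : F.lang ⊆ Fstar.lang) :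
    ∀ (vstar : W) (y : Y), ∃ wstar : W,
      F.yChildren {v : V | (F.reaching v ∩ Fstar.reaching vstar).Nonempty} y ⊆
        {v : V | (F.reaching v ∩ Fstar.reaching wstar).Nonempty} := by
  intro vstar y
  -- key: any child w of v ∈ K via y, witnessed by s, yields a y-successor of vstar
  have key : ∀ w ∈ F.yChildren {v : V | (F.reaching v ∩ Fstar.reaching vstar).Nonempty} y,
      ∃ wstar : W, y ∈ Fstar.tr vstar wstar ∧
        (F.reaching w ∩ Fstar.reaching wstar).Nonempty := by
    rintro w ⟨v, hv, hy⟩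
    obtain ⟨s, hsF, hsF'⟩ := hv
    have hwF : w ∈ F.reached (s ++ [y]) :=
      (F.reached_append s y w).mpr ⟨v, hsF, hy⟩
    have hlangF : s ++ [y] ∈ Fstar.lang := hlang ⟨w, hwF⟩
    obtain ⟨w', hw'⟩ := hlangF
    obtain ⟨u, hu, huy⟩ := (Fstar.reached_append s y w').mp hw'
    have : u = vstar := Fstar.reached_subsingleton hdet' s hu hsF'
    subst this
    exact ⟨w', huy, ⟨s ++ [y], hwF, hw'⟩⟩
  by_cases h : (F.yChildren {v : V | (F.reaching v ∩ Fstar.reaching vstar).Nonempty} y).Nonempty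
  · obtain ⟨w0, hw0⟩ := h
    obtain ⟨wstar, hys, -⟩ := key w0 hw0
    refine ⟨wstar, fun w hw => ?_⟩
    obtain ⟨w', hy', hmem⟩ := key w hw
    obtain rfl : w' = wstar := by
      by_contra hne
      have := hdet'.2 vstar w' wstar hne
      exact absurd (Set.mem_inter hy' hys) (by simp [this])
    exact hmem
  · exact ⟨Classical.arbitrary W, fun w hw => absurd ⟨w, hw⟩ h⟩
end

section
/- Let F be a deterministic filter and F* a deterministic filter that output simulates F. For each state v* of F* with R_{F*}(v*)∩L(F)≠∅, the set K_{v*}={v∈V(F) | R_F(v)∩R_{F*}(v*)≠∅} has a common output: ⋂_{v∈K_{v*}} c(v) ⊇ c*(v*), in particular c*(v*)∈c(v) for every v∈K_{v*} when c* assigns a single output. -/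
/-- each K_{v*} has a common output containing c*(v*). -/
theorem stmt_9 {V W Y C : Type} [Finite V] [Finite W]
    (F : ProcFilter V Y C) (Fstar : ProcFilter W Y C)
    (hdet : F.Deterministic) (hdet' : Fstar.Deterministic)
    (hsim : Fstar.OutputSimulates F)
    (vstar : W) (hv : (Fstar.reaching vstar ∩ F.lang).Nonempty) :
    ∀ v : V, (F.reaching v ∩ Fstar.reaching vstar).Nonempty →
      Fstar.out vstar ⊆ F.out v := by
  -- auxiliary: deterministic filters reach at most one state
  have key : ∀ (s : List Y) (v1 : V), ∀ w1 w2, w1 ∈ F.reachedFrom v1 s →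
      w2 ∈ F.reachedFrom v1 s → w1 = w2 := by
    intro s
    induction s with
    | nil => intro v1 w1 w2 h1 h2; simp [ProcFilter.reachedFrom] at h1 h2; rw [h1, h2]
    | cons y t ih =>
      intro v1 w1 w2 h1 h2
      obtain ⟨u1, hy1, hr1⟩ := h1
      obtain ⟨u2, hy2, hr2⟩ := h2
      have hu : u1 = u2 := by
        by_contra hne
        have := hdet.2 v1 u1 u2 hne
        exact absurd (Set.mem_inter hy1 hy2) (by rw [this]; exact not_false)
      subst hu
      exact ih u1 w1 w2 hr1 hr2
  intro v ⟨s, hsv, hsvstar⟩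
  have hsl : s ∈ F.lang := ⟨v, hsv⟩
  obtain ⟨-, hsub⟩ := hsim s hsl
  intro c hc
  have hc' : c ∈ Fstar.outs s := Set.mem_biUnion hsvstar hc
  have hco : c ∈ F.outs s := hsub hc'
  obtain ⟨v', hv', hcv'⟩ := by
    simpa [ProcFilter.outs, Set.mem_iUnion] using hco
  -- v' = v since F is deterministic and both reached by s
  obtain ⟨v0, hv0⟩ := hdet.1
  have hv1 : v ∈ F.reachedFrom v0 s := by
    simp [ProcFilter.reaching, ProcFilter.reached, hv0] at hsv; exact hsv
  have hv2 : v' ∈ F.reachedFrom v0 s := by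
    simp [ProcFilter.reached, hv0] at hv'; exact hv'
  rwa [key s v0 v' v hv2 hv1] at hcv'
end

section
/- Let F be a deterministic filter and K a zipped vertex cover such that each K_i has a common output. Then any filter F† induced from K satisfies: for every s∈L(F) reaching state v in F, the unique state of F† reached by s corresponds to a subset K_i with v∈K_i, and hence the output of F† on s lies in c(v). -/
/-- the unique state of the induced filter reached by `s`
corresponds to a cover member containing the state of F reached by `s`,
so its output lies in the output set of that state. -/
theorem stmt_16 {V W Y C : Type} [Finite V] [Finite W]
    (F : ProcFilter V Y C) (G : ProcFilter W Y C)
    (K : Set (Set V)) (κ : W → Set V)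
    (hdet : F.Deterministic)
    (hcov : F.IsCover K) (hzip : F.Zipped K)
    (hcom : ∀ S ∈ K, (⋂ v ∈ S, F.out v).Nonempty)
    (hind : G.IsInduced F K κ) :
    ∀ s ∈ F.lang, ∀ v ∈ F.reached s,
      ∃ w : W, G.reached s = {w} ∧ v ∈ κ w ∧ G.outs s ⊆ F.out v := by
  intro s hs v hv
  -- key induction lemma
  have key : ∀ (s : List Y) (v0 : V) (w0 : W), v0 ∈ κ w0 →
      ∀ v ∈ F.reachedFrom v0 s, ∃ w : W, G.reachedFrom w0 s = {w} ∧ v ∈ κ w := by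
    intro s
    induction s with
    | nil =>
      intro v0 w0 h v hvr
      simp only [ProcFilter.reachedFrom, Set.mem_singleton_iff] at hvr
      exact ⟨w0, rfl, hvr ▸ h⟩
    | cons y t ih =>
      intro v0 w0 h v hvr
      obtain ⟨u, hy, hu⟩ := hvr
      have hchild : u ∈ F.yChildren (κ w0) y := ⟨v0, h, hy⟩
      obtain ⟨w', hw'⟩ := hind.trans_ex w0 y ⟨u, hchild⟩
      have hsub := (hind.trans_sub w0 w' y hw').1
      obtain ⟨w, hweq, hvw⟩ := ih u w' (hsub hchild) v hu
      refine ⟨w, ?_, hvw⟩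
      ext x
      simp only [ProcFilter.reachedFrom, Set.mem_setOf_eq, Set.mem_singleton_iff]
      constructor
      · rintro ⟨w'', hy'', hx⟩
        have : w'' = w' := hind.trans_unique w0 w'' w' y hy'' hw'
        rw [this, hweq] at hx
        exact hx
      · intro hx
        exact ⟨w', hw', by rw [hweq]; exact hx⟩
  obtain ⟨w0, hG0, hinit⟩ := hind.init
  obtain ⟨vi, hvi⟩ := hdet.1
  obtain ⟨v0, hv0, hvr⟩ := Set.mem_iUnion₂.1 hv
  have hreach : G.reached s = G.reachedFrom w0 s := by
    unfold ProcFilter.reached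
    rw [hG0]; simp
  obtain ⟨w, hweq, hvw⟩ := key s v0 w0 (hinit v0 hv0) v hvr
  refine ⟨w, by rw [hreach, hweq], hvw, ?_⟩
  obtain ⟨o, ho, hoall⟩ := hind.out_single w
  have houts : G.outs s = {o} := by
    unfold ProcFilter.outs
    rw [hreach, hweq]
    simp [ho]
  rw [houts]
  intro c hc
  rw [Set.mem_singleton_iff.1 hc]
  exact hoall v hvw
end
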